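/- arXiv:1510.01661 — 2 statements merged into one kernel-verified Lean document; each statement's English description precedes it below -/
import Mathlib

section
/- Let Λ be a commutative ring, ξ ∈ Λ, and suppose h is a Λ-algebra with an ideal I such that h/I ≅ Λ/(ξ) as Λ-algebras and Fitt_{h/I}(I/I²) = 0. Then Fitt_Λ(I/I²) ⊆ (ξ). -/
/-- The 0-th Fitting ideal of an `A`-module `M`: generated by the `n × n` minors
(determinants of square matrices of relations) of any presentation `A^n ↠ M`. -/
noncomputable def fittingIdeal (A : Type*) [CommRing A] (M : Type*) [AddCommGroup M]
    [Module A M] : Ideal A :=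
  ⨆ (n : ℕ) (f : (Fin n → A) →ₗ[A] M) (_ : Function.Surjective f),
    Ideal.span {d : A | ∃ X : Matrix (Fin n) (Fin n) A, (∀ i, f (X i) = 0) ∧ X.det = d}

/-! A presentation `Λⁿ ↠ I/I²` extends `h/I`-linearly to a presentation `(h/I)ⁿ ↠ I/I²` whose
relations contain the images of the `Λ`-relations, so `Fitt_Λ(I/I²)` maps into
`Fitt_{h/I}(I/I²) = 0` and therefore lies in `ker(Λ → h/I) = ker(Λ → Λ/(ξ)) = (ξ)`. -/

instance Ideal.Cotangent.isScalarTower_quotient {Λ : Type*} [CommRing Λ] {h : Type*} [CommRing h]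
    [Algebra Λ h] (I : Ideal h) : IsScalarTower Λ (h ⧸ I) I.Cotangent :=
  IsScalarTower.of_algebraMap_smul fun r m => by
    rw [IsScalarTower.algebraMap_apply Λ h (h ⧸ I), algebraMap_smul, algebraMap_smul]

theorem det_mem_fittingIdeal {A M : Type*} [CommRing A] [AddCommGroup M] [Module A M] {n : ℕ}
    {f : (Fin n → A) →ₗ[A] M} (hf : Function.Surjective f) {X : Matrix (Fin n) (Fin n) A}
    (hX : ∀ i, f (X i) = 0) : X.det ∈ fittingIdeal A M :=
  (le_iSup_of_le n (le_iSup_of_le f (le_iSup_of_le hf le_rfl)) : _ ≤ fittingIdeal A M)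
    (Ideal.subset_span ⟨X, hX, rfl⟩)

section BaseChange

variable {A B M : Type*} [CommRing A] [CommRing B] [Algebra A B] [AddCommGroup M] [Module A M]
  [Module B M] [IsScalarTower A B M] {n : ℕ}

noncomputable def LinearMap.extendScalarsPi (f : (Fin n → A) →ₗ[A] M) : (Fin n → B) →ₗ[B] M :=
  Fintype.linearCombination B fun i => f (Pi.single i 1)

theorem LinearMap.extendScalarsPi_algebraMap (f : (Fin n → A) →ₗ[A] M) (c : Fin n → A) :
    f.extendScalarsPi (algebraMap A B ∘ c) = f c := by
  conv_rhs => rw [pi_eq_sum_univ' c, map_sum]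
  simp only [extendScalarsPi, Fintype.linearCombination_apply, Function.comp_apply,
    algebraMap_smul, map_smul]

theorem LinearMap.extendScalarsPi_surjective {f : (Fin n → A) →ₗ[A] M}
    (hf : Function.Surjective f) : Function.Surjective (f.extendScalarsPi (B := B)) := fun m => by
  obtain ⟨c, rfl⟩ := hf m
  exact ⟨_, f.extendScalarsPi_algebraMap c⟩

theorem map_fittingIdeal_le : (fittingIdeal A M).map (algebraMap A B) ≤ fittingIdeal B M := by
  refine Ideal.map_le_iff_le_comap.2 <| iSup_le fun n => iSup_le fun f => iSup_le fun hf =>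
    Ideal.span_le.2 ?_
  rintro _ ⟨X, hX, rfl⟩
  rw [SetLike.mem_coe, Ideal.mem_comap, RingHom.map_det]
  refine det_mem_fittingIdeal (f.extendScalarsPi_surjective hf) fun i => ?_
  rw [← hX i]
  exact f.extendScalarsPi_algebraMap (X i)

end BaseChange

theorem AlgEquiv.ker_algebraMap_eq {R A B : Type*} [CommRing R] [Ring A] [Ring B] [Algebra R A]
    [Algebra R B] (e : A ≃ₐ[R] B) : RingHom.ker (algebraMap R A) = RingHom.ker (algebraMap R B) := by
  rw [← e.toAlgHom.comp_algebraMap, RingHom.ker_comp_of_injective _ e.injective]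

theorem fittingIdeal_cotangent_le_general (Λ : Type*) [CommRing Λ] (ξ : Λ)
    (h : Type*) [CommRing h] [Algebra Λ h] (I : Ideal h)
    (e : (h ⧸ I) ≃ₐ[Λ] Λ ⧸ Ideal.span {ξ})
    (hfit : fittingIdeal (h ⧸ I) I.Cotangent = ⊥) :
    fittingIdeal Λ I.Cotangent ≤ Ideal.span {ξ} := by
  have hbot : (fittingIdeal Λ I.Cotangent).map (algebraMap Λ (h ⧸ I)) = ⊥ :=
    le_bot_iff.1 (hfit ▸ map_fittingIdeal_le)
  rwa [Ideal.map_eq_bot_iff_le_ker, e.ker_algebraMap_eq, Ideal.Quotient.algebraMap_eq,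
    Ideal.mk_ker] at hbot

/-- If `h` is a `Λ`-algebra with ideal `I` such that `h/I ≅ Λ/(ξ)` as `Λ`-algebras
and `Fitt_{h/I}(I/I²) = 0`, then `Fitt_Λ(I/I²) ⊆ (ξ)`. Here `I/I²` is the cotangent
module `I.Cotangent`, viewed as a `Λ`-module via `Λ → h`. -/
theorem fittingIdeal_cotangent_le (Λ : Type*) [CommRing Λ] (ξ : Λ)
    (h : Type*) [CommRing h] [Algebra Λ h] (I : Ideal h)
    [Module.FinitePresentation h I]
    (e : (h ⧸ I) ≃ₐ[Λ] Λ ⧸ Ideal.span {ξ})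
    (hfit : fittingIdeal (h ⧸ I) I.Cotangent = ⊥) :
    fittingIdeal Λ I.Cotangent ≤ Ideal.span {ξ} :=
  fittingIdeal_cotangent_le_general Λ ξ h I e hfit
end

section
/- Let Λ = 𝒪[[T]] over a complete discrete valuation ring 𝒪, and M a finitely generated Λ-module. Then M is torsion with projective dimension ≤ 1 if and only if M is torsion and M has no nonzero finite submodule. -/
/-!
Write `R = 𝒪⟦T⟧` and `p` for a uniformizer of `𝒪`, so that the maximal ideal of `R` is `(T, p)`.
Both sides are equivalent to: no nonzero `y ∈ M` is killed by `T` and `p`. Such a `y` spans a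
finite submodule (a quotient of the finite residue field), and a nonzero finite module contains
such a `y`, since elements of the maximal ideal act nilpotently on it.

The only relations `T x = p y` in `R` are the Koszul ones, and this passes to projective
modules. If `M = F / K` with `K` projective and `y` lifts to `v ∈ F`, then `T • (p v) = p • (T v)`
in `K` forces `p v ∈ p K`, hence `v ∈ K`. Conversely, if no such `y` exists, the same Koszul
argument shows that the kernel of a minimal presentation `Rʳ → K` lies in the maximal ideal
times itself, so it vanishes by Nakayama and `K` is free.
-/

open PowerSeries IsLocalRing

section Koszul
variable {R : Type*} [CommRing R]

/-- Exactness of the Koszul complex of `(a, b)` in degree one: every relation `a x = b y` is a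
multiple of the trivial relation `a b = b a`. -/
def IsKoszulRegular (a b : R) : Prop :=
  ∀ x y : R, a * x = b * y → ∃ z, x = b * z ∧ y = a * z

variable {a b : R}

theorem IsKoszulRegular.exists_eq_smul_of_smul_eq_smul (hab : IsKoszulRegular a b)
    {P : Type*} [AddCommGroup P] [Module R P] [Module.Projective R P] {u w : P}
    (h : a • u = b • w) : ∃ c : P, u = b • c ∧ w = a • c := by
  classical
  obtain ⟨s, hs⟩ := Module.projective_def.mp ‹Module.Projective R P›
  have hsh : a • s u = b • s w := by rw [← map_smul, ← map_smul, h]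
  choose z hz using fun i => hab (s u i) (s w i) (by simpa using congrArg (· i) hsh)
  set S := (s u).support ∪ (s w).support
  have hsum : ∀ v, (s v).support ⊆ S → v = ∑ i ∈ S, s v i • i := fun v hv => by
    conv_lhs => rw [← hs v, Finsupp.linearCombination_apply,
      Finsupp.sum_of_support_subset _ hv (fun i r => r • id i) (fun _ _ => zero_smul R _)]
    rfl
  refine ⟨∑ i ∈ S, z i • i, ?_, ?_⟩
  · rw [hsum u Finset.subset_union_left, Finset.smul_sum]
    simp only [hz, smul_smul]
  · rw [hsum w Finset.subset_union_right, Finset.smul_sum]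
    simp only [hz, smul_smul]

end Koszul

section FiniteModule
variable {R : Type*} [CommRing R] {N : Type*} [AddCommGroup N] [Module R N]

theorem exists_pow_smul_eq_zero_of_mem_maximalIdeal [IsLocalRing R] [Finite N] {t : R}
    (ht : t ∈ maximalIdeal R) (x : N) : ∃ k, t ^ k • x = 0 := by
  obtain ⟨i, j, hij, hx⟩ := Finite.exists_ne_map_eq_of_infinite fun k : ℕ => t ^ k • x
  wlog hlt : i < j generalizing i j
  · exact this j i hij.symm hx.symm (by omega)
  obtain ⟨d, rfl⟩ := Nat.exists_eq_add_of_lt hlt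
  have hunit : IsUnit (1 - t ^ (d + 1)) :=
    isUnit_one_sub_self_of_mem_nonunits _ (Ideal.pow_mem_of_mem _ ht _ d.succ_pos)
  refine ⟨i, (hunit.smul_eq_zero).mp ?_⟩
  rw [sub_smul, one_smul, smul_smul, ← pow_add, add_comm (d + 1), ← add_assoc]
  exact sub_eq_zero.mpr hx

theorem exists_smul_ne_zero_and_smul_smul_eq_zero {t : R} {x : N} (hx : x ≠ 0) {k : ℕ}
    (h : t ^ k • x = 0) : ∃ r : R, r • x ≠ 0 ∧ t • r • x = 0 := by
  induction k generalizing x with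
  | zero => exact absurd (by simpa using h) hx
  | succ k ih =>
    by_cases htx : t • x = 0
    · exact ⟨1, by simpa using hx, by simpa using htx⟩
    · obtain ⟨r, hr, htr⟩ := ih htx (by rwa [smul_smul, ← pow_succ])
      exact ⟨r * t, by rwa [mul_smul], by rwa [mul_smul]⟩

theorem exists_ne_zero_smul_eq_zero_of_finite [IsLocalRing R] [Finite N] [Nontrivial N]
    {a b : R} (ha : a ∈ maximalIdeal R) (hb : b ∈ maximalIdeal R) :
    ∃ y : N, y ≠ 0 ∧ a • y = 0 ∧ b • y = 0 := by
  obtain ⟨x, hx⟩ := exists_ne (0 : N)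
  obtain ⟨k, hk⟩ := exists_pow_smul_eq_zero_of_mem_maximalIdeal ha x
  obtain ⟨r, hr, har⟩ := exists_smul_ne_zero_and_smul_smul_eq_zero hx hk
  obtain ⟨l, hl⟩ := exists_pow_smul_eq_zero_of_mem_maximalIdeal hb (r • x)
  obtain ⟨s, hs, hbs⟩ := exists_smul_ne_zero_and_smul_smul_eq_zero hr hl
  exact ⟨s • r • x, hs, by rw [smul_comm, har, smul_zero], hbs⟩

theorem finite_span_singleton_of_maximalIdeal_smul_eq_zero [IsLocalRing R]
    [Finite (ResidueField R)] {y : N} (hy : ∀ r ∈ maximalIdeal R, r • y = 0) :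
    ((R ∙ y : Submodule R N) : Set N).Finite := by
  have : Finite (R ⧸ maximalIdeal R) := ‹Finite (ResidueField R)›
  have hker : maximalIdeal R ≤ LinearMap.ker (LinearMap.toSpanSingleton R N y) := hy
  rw [LinearMap.span_singleton_eq_range]
  refine (Set.finite_range (Submodule.liftQ _ _ hker)).subset ?_
  rintro _ ⟨r, rfl⟩
  exact ⟨Submodule.Quotient.mk r, rfl⟩

end FiniteModule

section MinimalGenerators
variable {R : Type*} [CommRing R] {K : Type*} [AddCommGroup K] [Module R K]

theorem span_range_comp_succAbove_eq_top {r : ℕ} {s : Fin (r + 1) → K}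
    (hs : Submodule.span R (Set.range s) = ⊤) {v : Fin (r + 1) → R} (hv : ∑ j, v j • s j = 0)
    {i : Fin (r + 1)} (hvi : IsUnit (v i)) :
    Submodule.span R (Set.range (s ∘ i.succAbove)) = ⊤ := by
  set S := Submodule.span R (Set.range (s ∘ i.succAbove))
  have hsi : s i ∈ S := by
    rw [Fin.sum_univ_succAbove _ i] at hv
    rw [← S.smul_mem_iff_of_isUnit hvi, eq_neg_of_add_eq_zero_left hv]
    exact S.neg_mem (S.sum_mem fun j _ => S.smul_mem _ (Submodule.subset_span ⟨j, rfl⟩))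
  rw [eq_top_iff, ← hs, Submodule.span_le]
  rintro _ ⟨j, rfl⟩
  rcases i.eq_self_or_eq_succAbove j with rfl | ⟨k, rfl⟩
  · exact hsi
  · exact Submodule.subset_span ⟨k, rfl⟩

theorem Module.Finite.exists_fin_surjective_forall_mem_ker_not_isUnit [Module.Finite R K] :
    ∃ (r : ℕ) (g : (Fin r → R) →ₗ[R] K), Function.Surjective g ∧
      ∀ v ∈ LinearMap.ker g, ∀ i, ¬IsUnit (v i) := by
  classical
  have hex : ∃ r, ∃ s : Fin r → K, Submodule.span R (Set.range s) = ⊤ := Module.Finite.exists_fin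
  obtain ⟨r, ⟨s, hs⟩, hmin⟩ : ∃ r, (∃ s : Fin r → K, Submodule.span R (Set.range s) = ⊤) ∧
      ∀ m < r, ¬∃ s : Fin m → K, Submodule.span R (Set.range s) = ⊤ :=
    ⟨_, Nat.find_spec hex, fun _ => Nat.find_min hex⟩
  refine ⟨r, Fintype.linearCombination R s, ?_, fun v hv i hvi => ?_⟩
  · rw [← LinearMap.range_eq_top, Fintype.range_linearCombination, hs]
  rw [LinearMap.mem_ker, Fintype.linearCombination_apply] at hv
  obtain ⟨r, rfl⟩ := Nat.exists_eq_add_one_of_ne_zero i.pos.ne'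
  exact hmin r r.lt_succ_self ⟨_, span_range_comp_succAbove_eq_top hs hv hvi⟩

end MinimalGenerators

section Presentation
variable {R : Type*} [CommRing R] {a b : R}
  {F : Type*} [AddCommGroup F] [Module R F] {M : Type*} [AddCommGroup M] [Module R M]

theorem IsKoszulRegular.eq_zero_of_projective_ker (hab : IsKoszulRegular a b)
    (hb : IsSMulRegular F b)
    (f : F →ₗ[R] M) (hf : Function.Surjective f) [Module.Projective R (LinearMap.ker f)]
    {y : M} (hay : a • y = 0) (hby : b • y = 0) : y = 0 := by
  obtain ⟨v, rfl⟩ := hf y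
  have hbv : b • v ∈ LinearMap.ker f := by rwa [LinearMap.mem_ker, map_smul]
  have hav : a • v ∈ LinearMap.ker f := by rwa [LinearMap.mem_ker, map_smul]
  obtain ⟨c, hc, -⟩ := hab.exists_eq_smul_of_smul_eq_smul
    (u := ⟨b • v, hbv⟩) (w := ⟨a • v, hav⟩) (Subtype.ext (smul_comm a b v))
  rw [hb (congrArg Subtype.val hc)]
  exact c.2

theorem IsKoszulRegular.exists_mem_ker_smul_add_smul_eq (hab : IsKoszulRegular a b)
    [Module.Projective R F] (f : F →ₗ[R] M) (hM : ∀ y : M, a • y = 0 → b • y = 0 → y = 0)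
    {G : Type*} [AddCommGroup G] [Module R G] (g : G →ₗ[R] LinearMap.ker f)
    (hg : Function.Surjective g) {v₁ v₂ : G} (hv : g (a • v₁ + b • v₂) = 0) :
    ∃ w₁ ∈ LinearMap.ker g, ∃ w₂ ∈ LinearMap.ker g, a • v₁ + b • v₂ = a • w₁ + b • w₂ := by
  have hrel : a • (g v₁ : F) = b • -(g v₂ : F) := by
    rw [smul_neg, eq_neg_iff_add_eq_zero]
    simpa using congrArg Subtype.val hv
  obtain ⟨c, hc₁, hc₂⟩ := hab.exists_eq_smul_of_smul_eq_smul hrel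
  have hc : c ∈ LinearMap.ker f := by
    refine hM (f c) ?_ ?_
    · rw [← map_smul, ← hc₂, map_neg, LinearMap.mem_ker.mp (g v₂).2, neg_zero]
    · rw [← map_smul, ← hc₁]; exact (g v₁).2
  obtain ⟨w, hw⟩ := hg ⟨c, hc⟩
  refine ⟨v₁ - b • w, ?_, v₂ + a • w, ?_, ?_⟩
  · rw [LinearMap.mem_ker, map_sub, map_smul, hw]
    ext; simp [hc₁]
  · rw [LinearMap.mem_ker, map_add, map_smul, hw]
    ext; simp [← hc₂]
  · rw [smul_sub, smul_add, smul_comm a b w]; abel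

theorem IsKoszulRegular.free_ker [IsLocalRing R] [IsNoetherianRing R]
    (hm : maximalIdeal R = Ideal.span {a, b}) (hab : IsKoszulRegular a b)
    (hM : ∀ y : M, a • y = 0 → b • y = 0 → y = 0) [Module.Projective R F] [Module.Finite R F]
    (f : F →ₗ[R] M) : Module.Free R (LinearMap.ker f) := by
  obtain ⟨r, g, hg, hker⟩ :=
    Module.Finite.exists_fin_surjective_forall_mem_ker_not_isUnit (R := R) (K := LinearMap.ker f)
  have hle : LinearMap.ker g ≤ maximalIdeal R • LinearMap.ker g := by
    intro v hv
    have hmem : ∀ i, v i ∈ Ideal.span {a, b} := fun i => hm ▸ hker v hv i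
    choose x y hxy using fun i => Ideal.mem_span_pair.mp (hmem i)
    obtain rfl : v = a • x + b • y := funext fun i => by simp [← hxy i, mul_comm]
    obtain ⟨w₁, hw₁, w₂, hw₂, heq⟩ := hab.exists_mem_ker_smul_add_smul_eq f hM g hg hv
    rw [heq, hm]
    exact add_mem (Submodule.smul_mem_smul (Ideal.subset_span (by simp)) hw₁)
      (Submodule.smul_mem_smul (Ideal.subset_span (by simp)) hw₂)
  have hbot : LinearMap.ker g = ⊥ := Submodule.eq_bot_of_le_smul_of_le_jacobson_bot _ _
    (IsNoetherian.noetherian _) hle (maximalIdeal_le_jacobson _)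
  exact Module.Free.of_equiv (LinearEquiv.ofBijective g ⟨LinearMap.ker_eq_bot.mp hbot, hg⟩)

end Presentation

section TwoDimensionalRegular
variable {R : Type*} [CommRing R] [IsLocalRing R] {a b : R}
  {M : Type*} [AddCommGroup M] [Module R M]

theorem forall_finite_submodule_eq_bot_iff [Finite (ResidueField R)]
    (hm : maximalIdeal R = Ideal.span {a, b}) :
    (∀ P : Submodule R M, (P : Set M).Finite → P = ⊥) ↔
      ∀ y : M, a • y = 0 → b • y = 0 → y = 0 := by
  refine ⟨fun hfin y hay hby => ?_, fun hM P hP => ?_⟩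
  · have hy : ∀ r ∈ maximalIdeal R, r • y = 0 := by
      intro r hr
      obtain ⟨x, z, rfl⟩ := Ideal.mem_span_pair.mp (hm ▸ hr)
      rw [add_smul, mul_smul, mul_smul, hay, hby, smul_zero, smul_zero, add_zero]
    simpa using hfin _ (finite_span_singleton_of_maximalIdeal_smul_eq_zero hy)
  · by_contra hP0
    have : Finite P := hP.to_subtype
    have : Nontrivial P := Submodule.nontrivial_iff_ne_bot.mpr hP0
    obtain ⟨y, hy, hay, hby⟩ := exists_ne_zero_smul_eq_zero_of_finite (N := P)
      (hm.ge (Ideal.subset_span (Set.mem_insert a {b})))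
      (hm.ge (Ideal.subset_span (Set.mem_insert_of_mem a rfl)))
    exact hy (Subtype.ext (hM y (congrArg Subtype.val hay) (congrArg Subtype.val hby)))

theorem IsKoszulRegular.exists_projective_ker_iff [IsNoetherianRing R]
    (hm : maximalIdeal R = Ideal.span {a, b}) (hab : IsKoszulRegular a b)
    (hb : IsSMulRegular R b) [Module.Finite R M] :
    (∃ (n : ℕ) (f : (Fin n → R) →ₗ[R] M),
        Function.Surjective f ∧ Module.Projective R (LinearMap.ker f)) ↔
      ∀ y : M, a • y = 0 → b • y = 0 → y = 0 := by
  refine ⟨fun ⟨n, f, hf, _⟩ _ hay hby => ?_, fun hM => ?_⟩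
  · exact hab.eq_zero_of_projective_ker (IsSMulRegular.pi fun _ => hb) f hf hay hby
  · obtain ⟨n, f, hf⟩ := Module.Finite.exists_fin' R M
    have := hab.free_ker hm hM f
    exact ⟨n, f, hf, inferInstance⟩

end TwoDimensionalRegular

namespace PowerSeries
variable {O : Type*} [CommRing O]

theorem isKoszulRegular_X_C {r : O} (hr : r ∈ nonZeroDivisors O) :
    IsKoszulRegular (X : O⟦X⟧) (C r) := by
  intro x y h
  have hy : X ∣ y := by
    rw [X_dvd_iff]
    have := congrArg constantCoeff h
    simp only [map_mul, constantCoeff_X, zero_mul, constantCoeff_C] at this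
    exact (mem_nonZeroDivisors_iff.mp hr).1 _ this.symm
  obtain ⟨z, rfl⟩ := hy
  refine ⟨z, X_mul_cancel ?_, rfl⟩
  rw [h]; ring

variable [IsLocalRing O]

theorem mem_maximalIdeal_iff {φ : O⟦X⟧} :
    φ ∈ maximalIdeal O⟦X⟧ ↔ constantCoeff φ ∈ maximalIdeal O := by
  simp only [mem_maximalIdeal, mem_nonunits_iff, isUnit_iff_constantCoeff]

theorem maximalIdeal_eq_span_X_C {p : O} (hp : maximalIdeal O = Ideal.span {p}) :
    maximalIdeal O⟦X⟧ = Ideal.span {X, C p} := by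
  refine le_antisymm (fun φ hφ => ?_) (Ideal.span_le.mpr ?_)
  · rw [mem_maximalIdeal_iff, hp, Ideal.mem_span_singleton'] at hφ
    obtain ⟨t, ht⟩ := hφ
    obtain ⟨w, hw⟩ : X ∣ φ - C (constantCoeff φ) := by simp [X_dvd_iff]
    exact Ideal.mem_span_pair.mpr ⟨w, C t, by rw [← map_mul, ht, mul_comm, ← hw]; ring⟩
  · rintro _ (rfl | rfl) <;> rw [SetLike.mem_coe, mem_maximalIdeal_iff]
    · simp
    · simp [hp]

instance finite_residueField [Finite (ResidueField O)] : Finite (ResidueField O⟦X⟧) := by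
  refine Finite.of_surjective (α := ResidueField O)
    (Ideal.quotientMap (maximalIdeal O⟦X⟧) C fun a ha => by
      rwa [Ideal.mem_comap, mem_maximalIdeal_iff, constantCoeff_C]) ?_
  intro ψ
  obtain ⟨φ, rfl⟩ := Ideal.Quotient.mk_surjective ψ
  refine ⟨Ideal.Quotient.mk _ (constantCoeff φ), ?_⟩
  rw [Ideal.quotientMap_mk]
  exact Ideal.Quotient.eq.mpr (mem_maximalIdeal_iff.mpr (by simp))

end PowerSeries

theorem torsion_pd_le_one_iff_no_finite_submodule_general (O : Type*) [CommRing O] [IsDomain O]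
    [IsDiscreteValuationRing O]
    [Finite (IsLocalRing.ResidueField O)]
    (M : Type*) [AddCommGroup M] [Module (PowerSeries O) M]
    [Module.Finite (PowerSeries O) M] :
    (Module.IsTorsion (PowerSeries O) M ∧
        ∃ (n : ℕ) (f : (Fin n → PowerSeries O) →ₗ[PowerSeries O] M),
          Function.Surjective f ∧ Module.Projective (PowerSeries O) (LinearMap.ker f)) ↔
      (Module.IsTorsion (PowerSeries O) M ∧
        ∀ P : Submodule (PowerSeries O) M, (P : Set M).Finite → P = ⊥) := by
  obtain ⟨p, hp⟩ := IsDiscreteValuationRing.exists_irreducible O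
  have hm := PowerSeries.maximalIdeal_eq_span_X_C hp.maximalIdeal_eq
  have hab := PowerSeries.isKoszulRegular_X_C (mem_nonZeroDivisors_of_ne_zero hp.ne_zero)
  have hb : IsSMulRegular O⟦X⟧ (C p) :=
    IsSMulRegular.of_ne_zero ((map_ne_zero_iff _ C_injective).mpr hp.ne_zero)
  rw [hab.exists_projective_ker_iff hm hb, forall_finite_submodule_eq_bot_iff hm]

/-- Over `Λ = 𝒪[[T]]` with `𝒪` a complete DVR with finite residue field, a finitely
generated `Λ`-module `M` is torsion of projective dimension `≤ 1` (expressed as a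
surjection from a finite free module with projective kernel) if and only if it is
torsion with no nonzero finite submodule. -/
theorem torsion_pd_le_one_iff_no_finite_submodule (O : Type*) [CommRing O] [IsDomain O]
    [IsDiscreteValuationRing O] [IsAdicComplete (IsLocalRing.maximalIdeal O) O]
    [Finite (IsLocalRing.ResidueField O)]
    (M : Type*) [AddCommGroup M] [Module (PowerSeries O) M]
    [Module.Finite (PowerSeries O) M] :
    (Module.IsTorsion (PowerSeries O) M ∧
        ∃ (n : ℕ) (f : (Fin n → PowerSeries O) →ₗ[PowerSeries O] M),
          Function.Surjective f ∧ Module.Projective (PowerSeries O) (LinearMap.ker f)) ↔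
      (Module.IsTorsion (PowerSeries O) M ∧
        ∀ P : Submodule (PowerSeries O) M, (P : Set M).Finite → P = ⊥) :=
  torsion_pd_le_one_iff_no_finite_submodule_general O M
end
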